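/- For every probability measure μ on E_Δ: (i) if Λ ∈ M^μ_t then Λ ∩ {t<ζ} ∈ F^{h,μ}_t, and Q̄_{μ,t}(Λ; t<ζ) = ∫_{E_Δ} h(x)·E^h_x[e^{αt} I_Λ / h(X_t); t < ζ] μ(dx) for all Λ ∈ M^μ_t; (ii) if s < t then M^μ_s ⊂ M^μ_t. -/

import Mathlib

open MeasureTheory Set Filter
open scoped NNReal ENNReal

noncomputable section

variable {S : Type*} [MeasurableSpace S] {Ω : Type*}

/-- The natural filtration `F⁰_t = σ(X_s : s ∈ [0,t])` of the process `X`. -/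
def F0 (X : ℝ≥0 → Ω → S) (t : ℝ≥0) : MeasurableSpace Ω :=
  ⨆ s ∈ Set.Iic t, MeasurableSpace.comap (X s) inferInstance

/-- `F⁰_∞ = σ(X_s : s ≥ 0)`. -/
def F0inf (X : ℝ≥0 → Ω → S) : MeasurableSpace Ω :=
  ⨆ s : ℝ≥0, MeasurableSpace.comap (X s) inferInstance

/-- `F⁰_{t+} = ⋂_{s > t} F⁰_s`. -/
def F0plus (X : ℝ≥0 → Ω → S) (t : ℝ≥0) : MeasurableSpace Ω :=
  ⨅ s ∈ Set.Ioi t, F0 X s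

/-- The life time `ζ(ω) = inf {t ≥ 0 : X_t(ω) = Δ}` (with value `∞` if the path
never reaches the cemetery `Δ`). -/
def lifetime (Δ : S) (X : ℝ≥0 → Ω → S) (ω : Ω) : ℝ≥0∞ :=
  ⨅ (t : ℝ≥0) (_ : X t ω = Δ), (t : ℝ≥0∞)

variable (Δ : S)

/-- `Q̄_{x,t}[f ; t < ζ] := h(x)·E^h_x[e^{αt}·f/h(X_t) ; t < ζ]`, the σ-finite
distribution up to time `t` applied to a nonnegative integrand `f`. -/
def Qbar (α : ℝ) (h : S → ℝ≥0∞) (X : ℝ≥0 → Ω → S)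
    (P : S → @Measure Ω (F0inf X)) (x : S) (t : ℝ≥0) (f : Ω → ℝ≥0∞) : ℝ≥0∞ :=
  h x * ∫⁻ ω in {ω | (t : ℝ≥0∞) < lifetime Δ X ω},
      ENNReal.ofReal (Real.exp (α * (t : ℝ))) * f ω * (h (X t ω))⁻¹ ∂(P x)

/-- `Q̄_{x,t}(Λ ; t < ζ)` of a set `Λ`. -/
def QbarSet (α : ℝ) (h : S → ℝ≥0∞) (X : ℝ≥0 → Ω → S)
    (P : S → @Measure Ω (F0inf X)) (x : S) (t : ℝ≥0) (Λ : Set Ω) : ℝ≥0∞ :=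
  Qbar Δ α h X P x t (Λ.indicator 1)

/-- `Q̄_{μ,t}(Λ ; t < ζ) = ∫ Q̄_{x,t}(Λ ; t < ζ) μ(dx)` (note `Q̄_{Δ,t} = 0`
automatically since `h Δ = 0`). -/
def Qmu (α : ℝ) (h : S → ℝ≥0∞) (X : ℝ≥0 → Ω → S)
    (P : S → @Measure Ω (F0inf X)) (μ : Measure S) (t : ℝ≥0) (Λ : Set Ω) : ℝ≥0∞ :=
  ∫⁻ x, QbarSet Δ α h X P x t Λ ∂μ

/-- `P^h_μ(Λ) = ∫ P^h_x(Λ) μ(dx)`. -/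
def Pmu (X : ℝ≥0 → Ω → S) (P : S → @Measure Ω (F0inf X)) (μ : Measure S)
    (Λ : Set Ω) : ℝ≥0∞ :=
  ∫⁻ x, P x Λ ∂μ

/-- `P^h_μ(Λ ; t < ζ)`. -/
def PmuT (X : ℝ≥0 → Ω → S) (P : S → @Measure Ω (F0inf X)) (μ : Measure S)
    (t : ℝ≥0) (Λ : Set Ω) : ℝ≥0∞ :=
  ∫⁻ x, P x (Λ ∩ {ω | (t : ℝ≥0∞) < lifetime Δ X ω}) ∂μ

/-- The augmented σ-field `M^μ_t`. -/
def Mmu (α : ℝ) (h : S → ℝ≥0∞) (X : ℝ≥0 → Ω → S)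
    (P : S → @Measure Ω (F0inf X)) (μ : Measure S) (t : ℝ≥0) : Set (Set Ω) :=
  {Λ | ∃ Λ' Γ : Set Ω, MeasurableSet[F0 X t] Λ' ∧ MeasurableSet[F0plus X t] Γ ∧
      symmDiff Λ Λ' ⊆ Γ ∧ ∀ T : ℝ≥0, t < T → Qmu Δ α h X P μ T Γ = 0}

/-- The auxiliary family `G^{μ,1}_t`. -/
def Gmu1 (α : ℝ) (h : S → ℝ≥0∞) (X : ℝ≥0 → Ω → S)
    (P : S → @Measure Ω (F0inf X)) (μ : Measure S) (t : ℝ≥0) : Set (Set Ω) :=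
  {Λ | ∃ Λ' Γ : Set Ω, MeasurableSet[F0 X t] Λ' ∧ MeasurableSet[F0plus X t] Γ ∧
      symmDiff Λ Λ' ⊆ Γ ∧ PmuT Δ X P μ t Γ = 0}

/-- The auxiliary family `G^{μ,2}_t`. -/
def Gmu2 (α : ℝ) (h : S → ℝ≥0∞) (X : ℝ≥0 → Ω → S)
    (P : S → @Measure Ω (F0inf X)) (μ : Measure S) (t : ℝ≥0) : Set (Set Ω) :=
  {Λ | ∃ Λ' Γ : Set Ω, MeasurableSet[F0plus X t] Λ' ∧ MeasurableSet[F0plus X t] Γ ∧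
      symmDiff Λ Λ' ⊆ Γ ∧ PmuT Δ X P μ t Γ = 0}

/-- The `P^h_μ`-augmentation `F^{h,μ}_t` of `F⁰_t` in `F⁰_∞`. -/
def Fhmu (X : ℝ≥0 → Ω → S) (P : S → @Measure Ω (F0inf X)) (μ : Measure S)
    (t : ℝ≥0) : Set (Set Ω) :=
  {Λ | ∃ Λ' Γ : Set Ω, MeasurableSet[F0 X t] Λ' ∧ MeasurableSet[F0inf X] Γ ∧
      symmDiff Λ Λ' ⊆ Γ ∧ Pmu X P μ Γ = 0}

/-- `M_t = ⋂_μ M^μ_t`, the intersection over all probability measures `μ` on `E_Δ`. -/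
def Mt (α : ℝ) (h : S → ℝ≥0∞) (X : ℝ≥0 → Ω → S)
    (P : S → @Measure Ω (F0inf X)) (t : ℝ≥0) : Set (Set Ω) :=
  {Λ | ∀ μ : Measure S, IsProbabilityMeasure μ → Λ ∈ Mmu Δ α h X P μ t}

/-- `M_∞ = σ(⋃_t M_t)`. -/
def Minf (α : ℝ) (h : S → ℝ≥0∞) (X : ℝ≥0 → Ω → S)
    (P : S → @Measure Ω (F0inf X)) : MeasurableSpace Ω :=
  MeasurableSpace.generateFrom {Λ | ∃ t : ℝ≥0, Λ ∈ Mt Δ α h X P t}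

/-- `M^μ_∞ = σ(⋃_t M^μ_t)`. -/
def Mmuinf (α : ℝ) (h : S → ℝ≥0∞) (X : ℝ≥0 → Ω → S)
    (P : S → @Measure Ω (F0inf X)) (μ : Measure S) : MeasurableSpace Ω :=
  MeasurableSpace.generateFrom {Λ | ∃ t : ℝ≥0, Λ ∈ Mmu Δ α h X P μ t}

/-- `M_σ` for an `(M_t)`-stopping time `σ`. -/
def Msigma (α : ℝ) (h : S → ℝ≥0∞) (X : ℝ≥0 → Ω → S)
    (P : S → @Measure Ω (F0inf X)) (σ : Ω → ℝ≥0∞) : Set (Set Ω) :=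
  {Λ | MeasurableSet[Minf Δ α h X P] Λ ∧
      ∀ t : ℝ≥0, Λ ∩ {ω | σ ω ≤ (t : ℝ≥0∞)} ∈ Mt Δ α h X P t}

/-- `M^μ_σ` for an `(M^μ_t)`-stopping time `σ`. -/
def Mmusigma (α : ℝ) (h : S → ℝ≥0∞) (X : ℝ≥0 → Ω → S)
    (P : S → @Measure Ω (F0inf X)) (μ : Measure S) (σ : Ω → ℝ≥0∞) : Set (Set Ω) :=
  {Λ | MeasurableSet[Mmuinf Δ α h X P μ] Λ ∧
      ∀ t : ℝ≥0, Λ ∩ {ω | σ ω ≤ (t : ℝ≥0∞)} ∈ Mmu Δ α h X P μ t}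

/-- `F^{h,μ}_T` for an `(F^{h,μ}_t)`-stopping time `T`. -/
def FhmuStop (X : ℝ≥0 → Ω → S) (P : S → @Measure Ω (F0inf X)) (μ : Measure S)
    (T : Ω → ℝ≥0∞) : Set (Set Ω) :=
  {Λ | ∀ t : ℝ≥0, Λ ∩ {ω | T ω ≤ (t : ℝ≥0∞)} ∈ Fhmu X P μ t}

/-- `X_σ`, with the convention `X_∞ = Δ`. -/
def Xstop (X : ℝ≥0 → Ω → S) (σ : Ω → ℝ≥0∞) (ω : Ω) : S :=
  if σ ω < ∞ then X (σ ω).toNNReal ω else Δ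

/-- The shift `θ_σ` at a random time `σ`. -/
def thetaStop (θ : ℝ≥0 → Ω → Ω) (σ : Ω → ℝ≥0∞) (ω : Ω) : Ω :=
  θ (σ ω).toNNReal ω

/-- `Q̄_{x,σ}[f ; σ < ζ] := h(x)·E^h_x[e^{ασ}·f/h(X_σ) ; σ < ζ]`, the σ-finite
distribution up to a stopping time `σ` applied to a nonnegative integrand `f`. -/
def QbarStop (α : ℝ) (h : S → ℝ≥0∞) (X : ℝ≥0 → Ω → S)
    (P : S → @Measure Ω (F0inf X)) (x : S) (σ : Ω → ℝ≥0∞) (f : Ω → ℝ≥0∞) : ℝ≥0∞ :=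
  h x * ∫⁻ ω in {ω | σ ω < lifetime Δ X ω},
      ENNReal.ofReal (Real.exp (α * (σ ω).toReal)) * f ω * (h (Xstop Δ X σ ω))⁻¹ ∂(P x)

/-- `Q̄_{x,σ}(Λ ; σ < ζ)` of a set `Λ`. -/
def QbarStopSet (α : ℝ) (h : S → ℝ≥0∞) (X : ℝ≥0 → Ω → S)
    (P : S → @Measure Ω (F0inf X)) (x : S) (σ : Ω → ℝ≥0∞) (Λ : Set Ω) : ℝ≥0∞ :=
  QbarStop Δ α h X P x σ (Λ.indicator 1)

/-- The entrance time `D_B = inf {t ≥ 0 : X_t ∈ B}`. -/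
def entranceTime (B : Set S) (X : ℝ≥0 → Ω → S) (ω : Ω) : ℝ≥0∞ :=
  ⨅ (t : ℝ≥0) (_ : X t ω ∈ B), (t : ℝ≥0∞)

/-- The hitting time `σ_B = inf {t > 0 : X_t ∈ B}`. -/
def hittingTime (B : Set S) (X : ℝ≥0 → Ω → S) (ω : Ω) : ℝ≥0∞ :=
  ⨅ (t : ℝ≥0) (_ : 0 < t ∧ X t ω ∈ B), (t : ℝ≥0∞)

/-- A set is universally measurable (`∈ B(E_Δ)*`) if it lies in the completion of
`B(E_Δ)` with respect to every probability measure. -/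
def UniversallyMeasurableSet (A : Set S) : Prop :=
  ∀ ν : Measure S, IsProbabilityMeasure ν → NullMeasurableSet A ν

/-- Iterated kernel integral
`∫ κ_{t₁-t₀}(x,dx₁) ∫ κ_{t₂-t₁}(x₁,dx₂) ⋯ f(x₁,…,xₙ)`, where `t₀` is the
starting time. -/
def iterK (κ : ℝ≥0 → S → Measure S) :
    (n : ℕ) → (Fin (n + 1) → ℝ≥0) → ℝ≥0 → S → ((Fin (n + 1) → S) → ℝ≥0∞) → ℝ≥0∞
  | 0, t, t0, x, f => ∫⁻ y, f (fun _ => y) ∂(κ (t 0 - t0) x)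
  | n + 1, t, t0, x, f =>
      ∫⁻ y, iterK κ n (fun i => t i.succ) (t 0) y (fun v => f (Fin.cons y v))
        ∂(κ (t 0 - t0) x)


/-- `γ = (σ + τ∘θ_σ)_ζ`, the time `σ + τ∘θ_σ` truncated to `∞` off `{σ + τ∘θ_σ < ζ}`. -/
def gammaTime (Δ : S) (X : ℝ≥0 → Ω → S) (θ : ℝ≥0 → Ω → Ω) (σ τ : Ω → ℝ≥0∞)
    (ω : Ω) : ℝ≥0∞ :=
  if σ ω + τ (thetaStop θ σ ω) < lifetime Δ X ω then σ ω + τ (thetaStop θ σ ω)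
  else ∞

end

/-! A set of `M^μ_t` differs from a set of `F⁰_t` by a subset of some `Γ ∈ F⁰_{t+}` that is
`Q̄_{μ,T}`-null for every `T > t`. Since `e^{αT}/h(X_T)` is positive on `{T < ζ}`, this makes
`Γ ∩ {T < ζ}` a `P^h_x`-null set for `μ`-a.e. `x`, and letting `T ↓ t` the same holds for
`Γ ∩ {t < ζ}`. This gives the formula for `Q̄_{μ,t}` at once. For the augmentation, the event
`{t < ζ} = θ_t⁻¹ {0 < ζ}` lies only in `F⁰_{t+}`; but by the Markov property
`P^h_x(t < ζ ; Λ) = E^h_x[φ(X_t) ; Λ]` for `Λ ∈ F⁰_{t+}`, where `φ(y) = P^h_y(0 < ζ)`, so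
`{t < ζ}` agrees `P^h_x`-a.s. with the `F⁰_t`-event `{φ(X_t) = 1}`. -/

open Topology

section Filtration

variable {S : Type*} [MeasurableSpace S] {Ω : Type*} (X : ℝ≥0 → Ω → S)

lemma F0_mono {s t : ℝ≥0} (hst : s ≤ t) : F0 X s ≤ F0 X t :=
  biSup_mono fun _ hu => le_trans hu hst

lemma measurable_F0 {u t : ℝ≥0} (hut : u ≤ t) : Measurable[F0 X t] (X u) :=
  Measurable.of_comap_le <| le_iSup₂
    (f := fun s (_ : s ∈ Iic t) => MeasurableSpace.comap (X s) inferInstance) u hut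

lemma F0_le_F0inf (t : ℝ≥0) : F0 X t ≤ F0inf X :=
  iSup₂_le fun u _ => le_iSup (fun s => MeasurableSpace.comap (X s) inferInstance) u

lemma measurable_F0inf (u : ℝ≥0) : Measurable[F0inf X] (X u) :=
  (measurable_F0 X le_rfl).mono (F0_le_F0inf X u) le_rfl

lemma F0plus_le_F0 {t s : ℝ≥0} (hts : t < s) : F0plus X t ≤ F0 X s :=
  iInf₂_le s hts

lemma F0plus_le_F0inf (t : ℝ≥0) : F0plus X t ≤ F0inf X :=
  (F0plus_le_F0 X (lt_add_one t)).trans (F0_le_F0inf X _)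

lemma F0plus_mono {s t : ℝ≥0} (hst : s ≤ t) : F0plus X s ≤ F0plus X t :=
  le_iInf₂ fun _ hu => F0plus_le_F0 X (hst.trans_lt hu)

end Filtration

lemma ENNReal.coe_lt_iff_exists_seq_lt {T : ℝ≥0} {u : ℕ → ℝ≥0} (hu : ∀ n, T < u n)
    (hlim : Tendsto u atTop (𝓝 T)) {a : ℝ≥0∞} : (T : ℝ≥0∞) < a ↔ ∃ n, (u n : ℝ≥0∞) < a := by
  refine ⟨fun hTa => ?_, fun ⟨n, hn⟩ => (ENNReal.coe_lt_coe.mpr (hu n)).trans hn⟩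
  obtain ⟨r, hTr, hra⟩ := ENNReal.lt_iff_exists_nnreal_btwn.mp hTa
  obtain ⟨n, hn⟩ := (hlim.eventually (gt_mem_nhds (ENNReal.coe_lt_coe.mp hTr))).exists
  exact ⟨n, (ENNReal.coe_lt_coe.mpr hn).trans hra⟩

lemma inter_symmDiff_inter_subset {α : Type*} (Λ Λ' L A : Set α) :
    symmDiff (Λ ∩ L) (Λ' ∩ A) ⊆ symmDiff Λ Λ' ∩ L ∪ symmDiff L A := by
  intro ω
  simp only [Set.mem_symmDiff, mem_inter_iff, mem_union]
  tauto

section Lifetime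

variable {S : Type*} {Ω : Type*} (Δ : S) {X : ℝ≥0 → Ω → S} {ω : Ω}

lemma lifetime_le_of_eq_cem {u : ℝ≥0} (hu : X u ω = Δ) : lifetime Δ X ω ≤ u :=
  iInf₂_le u hu

lemma ne_cem_of_lt_lifetime {T : ℝ≥0} (hT : (T : ℝ≥0∞) < lifetime Δ X ω) : X T ω ≠ Δ :=
  fun hdead => (lifetime_le_of_eq_cem Δ hdead).not_gt hT

lemma lt_lifetime_iff (hX_absorb : ∀ (ω : Ω) (s t : ℝ≥0), s ≤ t → X s ω = Δ → X t ω = Δ)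
    {T : ℝ≥0} : (T : ℝ≥0∞) < lifetime Δ X ω ↔ ∃ u : ℝ≥0, T < u ∧ X u ω ≠ Δ := by
  constructor
  · intro hT
    by_contra! hdead
    refine hT.not_ge (ENNReal.le_of_forall_pos_le_add fun ε hε _ => ?_)
    exact_mod_cast lifetime_le_of_eq_cem Δ (hdead _ (lt_add_of_pos_right T hε))
  · rintro ⟨u, hTu, hu⟩
    refine (ENNReal.coe_lt_coe.mpr hTu).trans_le (le_iInf₂ fun a ha => ?_)
    by_contra! hau
    exact hu (hX_absorb ω a u (ENNReal.coe_le_coe.mp hau.le) ha)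

lemma lt_lifetime_iff_exists_ne_cem
    (hX_absorb : ∀ (ω : Ω) (s t : ℝ≥0), s ≤ t → X s ω = Δ → X t ω = Δ)
    {T : ℝ≥0} {u : ℕ → ℝ≥0} (hu : ∀ n, T < u n) (hlim : Tendsto u atTop (𝓝 T)) :
    (T : ℝ≥0∞) < lifetime Δ X ω ↔ ∃ n, X (u n) ω ≠ Δ := by
  rw [lt_lifetime_iff Δ hX_absorb]
  refine ⟨fun ⟨r, hTr, hr⟩ => ?_, fun ⟨n, hn⟩ => ⟨u n, hu n, hn⟩⟩
  obtain ⟨n, hn⟩ := (hlim.eventually (gt_mem_nhds hTr)).exists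
  exact ⟨n, fun hdead => hr (hX_absorb ω _ _ hn.le hdead)⟩

lemma lt_lifetime_iff_pos_lifetime_shift
    (hX_absorb : ∀ (ω : Ω) (s t : ℝ≥0), s ≤ t → X s ω = Δ → X t ω = Δ)
    {θ : ℝ≥0 → Ω → Ω} (hshift : ∀ (s t : ℝ≥0) (ω : Ω), X t (θ s ω) = X (t + s) ω) (t : ℝ≥0) :
    (t : ℝ≥0∞) < lifetime Δ X ω ↔ 0 < lifetime Δ X (θ t ω) := by
  rw [← ENNReal.coe_zero, lt_lifetime_iff Δ hX_absorb, lt_lifetime_iff Δ hX_absorb]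
  constructor
  · rintro ⟨u, htu, hu⟩
    exact ⟨u - t, tsub_pos_of_lt htu, by rwa [hshift, tsub_add_cancel_of_le htu.le]⟩
  · rintro ⟨v, hv, hXv⟩
    exact ⟨v + t, lt_add_of_pos_left t hv, by rwa [← hshift]⟩

variable [MeasurableSpace S] [MeasurableSingletonClass S]

lemma measurableSet_lt_lifetime_F0
    (hX_absorb : ∀ (ω : Ω) (s t : ℝ≥0), s ≤ t → X s ω = Δ → X t ω = Δ)
    {T s : ℝ≥0} (hTs : T < s) : MeasurableSet[F0 X s] {ω | (T : ℝ≥0∞) < lifetime Δ X ω} := by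
  obtain ⟨u, -, hu, hlim⟩ := exists_seq_strictAnti_tendsto' hTs
  have hunion : {ω | (T : ℝ≥0∞) < lifetime Δ X ω} = ⋃ n, X (u n) ⁻¹' {Δ}ᶜ := by
    ext ω
    simp [lt_lifetime_iff_exists_ne_cem Δ hX_absorb (fun n => (hu n).1) hlim]
  rw [hunion]
  exact MeasurableSet.iUnion fun n =>
    measurable_F0 X (hu n).2.le (measurableSet_singleton Δ).compl

lemma measurableSet_lt_lifetime_F0plus
    (hX_absorb : ∀ (ω : Ω) (s t : ℝ≥0), s ≤ t → X s ω = Δ → X t ω = Δ) (T : ℝ≥0) :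
    MeasurableSet[F0plus X T] {ω | (T : ℝ≥0∞) < lifetime Δ X ω} := by
  rw [F0plus, MeasurableSpace.measurableSet_iInf]
  exact fun _ => MeasurableSpace.measurableSet_iInf.mpr fun hs =>
    measurableSet_lt_lifetime_F0 Δ hX_absorb hs

lemma measurableSet_lt_lifetime_F0inf
    (hX_absorb : ∀ (ω : Ω) (s t : ℝ≥0), s ≤ t → X s ω = Δ → X t ω = Δ) (T : ℝ≥0) :
    MeasurableSet[F0inf X] {ω | (T : ℝ≥0∞) < lifetime Δ X ω} :=
  F0plus_le_F0inf X T _ (measurableSet_lt_lifetime_F0plus Δ hX_absorb T)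

lemma measurableSet_pos_lifetime
    (hX_absorb : ∀ (ω : Ω) (s t : ℝ≥0), s ≤ t → X s ω = Δ → X t ω = Δ) :
    MeasurableSet[F0inf X] {ω | 0 < lifetime Δ X ω} := by
  simpa using measurableSet_lt_lifetime_F0inf Δ hX_absorb 0

end Lifetime

section Integration

variable {Ω : Type*} [MeasurableSpace Ω] {μ : Measure Ω} {f : Ω → ℝ≥0∞} {L : Set Ω}

lemma measure_inter_eq_zero_of_setLIntegral_eq_zero {Γ : Set Ω} (hL : MeasurableSet L)
    (hf : AEMeasurable f (μ.restrict L)) (hint : ∫⁻ ω in L, f ω ∂μ = 0)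
    (hpos : ∀ ω ∈ Γ ∩ L, f ω ≠ 0) : μ (Γ ∩ L) = 0 := by
  have hzero : ∀ᵐ ω ∂μ, ω ∈ L → f ω = 0 :=
    (ae_restrict_iff' hL).mp ((lintegral_eq_zero_iff' hf).mp hint)
  rw [measure_eq_zero_iff_ae_notMem]
  filter_upwards [hzero] with ω hω hmem
  exact hpos ω hmem (hω hmem.2)

lemma measure_symmDiff_setOf_eq_one_eq_zero [IsFiniteMeasure μ] (hf : Measurable f)
    (hf_le : ∀ ω, f ω ≤ 1) (hL : MeasurableSet L) (h_on : μ L = ∫⁻ ω in L, f ω ∂μ)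
    (h_off : ∫⁻ ω in Lᶜ, f ω ∂μ = 0) : μ (symmDiff L {ω | f ω = 1}) = 0 := by
  have h_one : ∀ᵐ ω ∂μ, ω ∈ L → 1 - f ω = 0 := by
    refine (setLIntegral_eq_zero_iff hL (f := fun ω => 1 - f ω) (measurable_const.sub hf)).mp ?_
    rw [lintegral_sub hf (h_on ▸ measure_ne_top μ L) (ae_of_all _ hf_le), setLIntegral_one,
      ← h_on, tsub_self]
  have h_zero : ∀ᵐ ω ∂μ, ω ∈ Lᶜ → f ω = 0 := (setLIntegral_eq_zero_iff hL.compl hf).mp h_off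
  rw [measure_eq_zero_iff_ae_notMem]
  filter_upwards [h_one, h_zero] with ω h1 h0
  rintro (⟨hωL, hω1⟩ | ⟨hω1, hωL⟩)
  · exact hω1 (le_antisymm (hf_le ω) (tsub_eq_zero_iff_le.mp (h1 hωL)))
  · exact zero_ne_one ((h0 hωL).symm.trans hω1)

end Integration

section MarkovFamily

variable {S : Type*} [MeasurableSpace S] [MeasurableSingletonClass S] {Ω : Type*} (Δ : S)
  {X : ℝ≥0 → Ω → S} {P : S → @Measure Ω (F0inf X)} {h : S → ℝ≥0∞} {α : ℝ}

lemma measurable_Qbar (hX_absorb : ∀ (ω : Ω) (s t : ℝ≥0), s ≤ t → X s ω = Δ → X t ω = Δ)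
    (h_meas : Measurable h)
    (hP_meas : ∀ Λ : Set Ω, MeasurableSet[F0inf X] Λ → Measurable fun x => P x Λ)
    {f : Ω → ℝ≥0∞} (hf : Measurable[F0inf X] f) (T : ℝ≥0) :
    Measurable fun x => Qbar Δ α h X P x T f := by
  let := F0inf X
  have hL := measurableSet_lt_lifetime_F0inf Δ hX_absorb T
  have hg : Measurable fun ω => ENNReal.ofReal (Real.exp (α * T)) * f ω * (h (X T ω))⁻¹ :=
    (measurable_const.mul hf).mul (h_meas.comp (measurable_F0inf X T)).inv
  simp only [Qbar, ← lintegral_indicator hL]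
  exact h_meas.mul ((Measure.measurable_lintegral (hg.indicator hL)).comp
    (Measure.measurable_of_measurable_coe P hP_meas))

lemma measure_inter_lt_lifetime_eq_zero_of_QbarSet_eq_zero
    (hX_absorb : ∀ (ω : Ω) (s t : ℝ≥0), s ≤ t → X s ω = Δ → X t ω = Δ)
    (h_meas : Measurable h) (h_pos : ∀ x : S, x ≠ Δ → 0 < h x ∧ h x < ∞)
    {Γ : Set Ω} (hΓ : MeasurableSet[F0inf X] Γ) {x : S} {T : ℝ≥0} (hx : h x ≠ 0)
    (hQ : QbarSet Δ α h X P x T Γ = 0) :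
    P x (Γ ∩ {ω | (T : ℝ≥0∞) < lifetime Δ X ω}) = 0 := by
  let := F0inf X
  refine measure_inter_eq_zero_of_setLIntegral_eq_zero
    (measurableSet_lt_lifetime_F0inf Δ hX_absorb T) (Measurable.aemeasurable ?_)
    ((mul_eq_zero.mp hQ).resolve_left hx) ?_
  · exact (measurable_const.mul (measurable_one.indicator hΓ)).mul
      (h_meas.comp (measurable_F0inf X T)).inv
  · rintro ω ⟨hωΓ, hωL⟩
    rw [indicator_of_mem hωΓ, Pi.one_apply, mul_one]
    exact mul_ne_zero (ENNReal.ofReal_pos.mpr (Real.exp_pos _)).ne'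
      (ENNReal.inv_ne_zero.mpr (h_pos _ (ne_cem_of_lt_lifetime Δ hωL)).2.ne)

lemma measure_pos_lifetime_eq_zero_of_start_cem [IsProbabilityMeasure (P Δ)]
    (hP_start : P Δ {ω | X 0 ω = Δ} = 1) : P Δ {ω | 0 < lifetime Δ X ω} = 0 := by
  refine measure_mono_null (t := {ω | X 0 ω = Δ}ᶜ) (fun ω hω hstart => ?_)
    ((prob_compl_eq_zero_iff (measurable_F0inf X 0 (measurableSet_singleton Δ))).mpr hP_start)
  exact (hω : 0 < lifetime Δ X ω).not_ge (by exact_mod_cast lifetime_le_of_eq_cem Δ hstart)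

lemma ae_measure_inter_lt_lifetime_eq_zero
    (hX_absorb : ∀ (ω : Ω) (s t : ℝ≥0), s ≤ t → X s ω = Δ → X t ω = Δ)
    (h_meas : Measurable h) (h_pos : ∀ x : S, x ≠ Δ → 0 < h x ∧ h x < ∞)
    (hP_prob : ∀ x : S, IsProbabilityMeasure (P x))
    (hP_meas : ∀ Λ : Set Ω, MeasurableSet[F0inf X] Λ → Measurable fun x => P x Λ)
    (hP_start : ∀ x : S, P x {ω | X 0 ω = x} = 1)
    {μ : Measure S} {t : ℝ≥0} {Γ : Set Ω} (hΓ : MeasurableSet[F0inf X] Γ)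
    (hQ : ∀ T : ℝ≥0, t < T → Qmu Δ α h X P μ T Γ = 0) :
    ∀ᵐ x ∂μ, P x (Γ ∩ {ω | (t : ℝ≥0∞) < lifetime Δ X ω}) = 0 := by
  let := F0inf X
  obtain ⟨u, -, hu, hlim⟩ := exists_seq_strictAnti_tendsto' (lt_add_one t)
  have hQ_ae : ∀ᵐ x ∂μ, ∀ n, QbarSet Δ α h X P x (u n) Γ = 0 :=
    ae_all_iff.mpr fun n => (lintegral_eq_zero_iff (measurable_Qbar Δ hX_absorb h_meas hP_meas
      (measurable_one.indicator hΓ) (u n))).mp (hQ _ (hu n).1)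
  filter_upwards [hQ_ae] with x hx
  rcases eq_or_ne (h x) 0 with hx0 | hx0
  · have hxΔ : x = Δ := by_contra fun hne => (h_pos x hne).1.ne' hx0
    rw [hxΔ]
    have := hP_prob Δ
    refine measure_mono_null (fun ω hω => ?_)
      (measure_pos_lifetime_eq_zero_of_start_cem Δ (hP_start Δ))
    exact pos_of_gt (a := (t : ℝ≥0∞)) hω.2
  · have hunion : Γ ∩ {ω | (t : ℝ≥0∞) < lifetime Δ X ω} =
        ⋃ n, Γ ∩ {ω | (u n : ℝ≥0∞) < lifetime Δ X ω} := by
      ext ω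
      simp [ENNReal.coe_lt_iff_exists_seq_lt (fun n => (hu n).1) hlim]
    rw [hunion]
    exact measure_iUnion_null fun n =>
      measure_inter_lt_lifetime_eq_zero_of_QbarSet_eq_zero Δ hX_absorb h_meas h_pos hΓ hx0 (hx n)

lemma measure_lt_lifetime_inter_eq_setLIntegral
    (hX_absorb : ∀ (ω : Ω) (s t : ℝ≥0), s ≤ t → X s ω = Δ → X t ω = Δ)
    {θ : ℝ≥0 → Ω → Ω} (hshift : ∀ (s t : ℝ≥0) (ω : Ω), X t (θ s ω) = X (t + s) ω)
    (hMarkov : ∀ (s : ℝ≥0) (x : S) (Y : Ω → ℝ≥0∞), Measurable[F0inf X] Y →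
      ∀ Λ : Set Ω, MeasurableSet[F0plus X s] Λ →
        ∫⁻ ω in Λ, Y (θ s ω) ∂(P x)
          = ∫⁻ ω in Λ, (∫⁻ ω', Y ω' ∂(P (X s ω))) ∂(P x))
    (t : ℝ≥0) (x : S) {Λ : Set Ω} (hΛ : MeasurableSet[F0plus X t] Λ) :
    P x ({ω | (t : ℝ≥0∞) < lifetime Δ X ω} ∩ Λ)
      = ∫⁻ ω in Λ, P (X t ω) {ω' | 0 < lifetime Δ X ω'} ∂(P x) := by
  let := F0inf X
  have hL0 := measurableSet_pos_lifetime Δ hX_absorb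
  have hLt := measurableSet_lt_lifetime_F0inf Δ hX_absorb t
  have hindicator : (fun ω => {ω | 0 < lifetime Δ X ω}.indicator 1 (θ t ω))
      = {ω | (t : ℝ≥0∞) < lifetime Δ X ω}.indicator (1 : Ω → ℝ≥0∞) := by
    ext ω
    simp [indicator_apply, lt_lifetime_iff_pos_lifetime_shift Δ hX_absorb hshift t]
  calc P x ({ω | (t : ℝ≥0∞) < lifetime Δ X ω} ∩ Λ)
      = ∫⁻ ω in Λ, {ω | (t : ℝ≥0∞) < lifetime Δ X ω}.indicator 1 ω ∂(P x) := by
        rw [lintegral_indicator_one hLt, Measure.restrict_apply hLt]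
    _ = ∫⁻ ω in Λ, ∫⁻ ω', {ω | 0 < lifetime Δ X ω}.indicator 1 ω' ∂(P (X t ω)) ∂(P x) := by
        rw [← hindicator]
        exact hMarkov t x _ (measurable_one.indicator hL0) Λ hΛ
    _ = ∫⁻ ω in Λ, P (X t ω) {ω' | 0 < lifetime Δ X ω'} ∂(P x) := by
        simp only [lintegral_indicator_one hL0]

lemma measure_symmDiff_lt_lifetime_eq_zero
    (hX_absorb : ∀ (ω : Ω) (s t : ℝ≥0), s ≤ t → X s ω = Δ → X t ω = Δ)
    {θ : ℝ≥0 → Ω → Ω} (hshift : ∀ (s t : ℝ≥0) (ω : Ω), X t (θ s ω) = X (t + s) ω)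
    (hP_prob : ∀ x : S, IsProbabilityMeasure (P x))
    (hP_meas : ∀ Λ : Set Ω, MeasurableSet[F0inf X] Λ → Measurable fun x => P x Λ)
    (hMarkov : ∀ (s : ℝ≥0) (x : S) (Y : Ω → ℝ≥0∞), Measurable[F0inf X] Y →
      ∀ Λ : Set Ω, MeasurableSet[F0plus X s] Λ →
        ∫⁻ ω in Λ, Y (θ s ω) ∂(P x)
          = ∫⁻ ω in Λ, (∫⁻ ω', Y ω' ∂(P (X s ω))) ∂(P x))
    (t : ℝ≥0) (x : S) :
    P x (symmDiff {ω | (t : ℝ≥0∞) < lifetime Δ X ω}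
      (X t ⁻¹' {y | P y {ω | 0 < lifetime Δ X ω} = 1})) = 0 := by
  let := F0inf X
  have hL0 := measurableSet_pos_lifetime Δ hX_absorb
  have hLt := measurableSet_lt_lifetime_F0plus Δ hX_absorb t
  refine measure_symmDiff_setOf_eq_one_eq_zero ((hP_meas _ hL0).comp (measurable_F0inf X t))
    (fun ω => (hP_prob (X t ω)).measure_univ ▸ measure_mono (subset_univ _))
    (F0plus_le_F0inf X t _ hLt) ?_ ?_
  · rw [← measure_lt_lifetime_inter_eq_setLIntegral Δ hX_absorb hshift hMarkov t x hLt,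
      inter_self]
  · rw [← measure_lt_lifetime_inter_eq_setLIntegral Δ hX_absorb hshift hMarkov t x hLt.compl,
      inter_compl_self, measure_empty]

lemma QbarSet_congr_of_symmDiff_subset
    (hX_absorb : ∀ (ω : Ω) (s t : ℝ≥0), s ≤ t → X s ω = Δ → X t ω = Δ)
    {x : S} {t : ℝ≥0} {Λ Λ' Γ : Set Ω} (hsd : symmDiff Λ Λ' ⊆ Γ)
    (hΓ : P x (Γ ∩ {ω | (t : ℝ≥0∞) < lifetime Δ X ω}) = 0) :
    QbarSet Δ α h X P x t Λ = QbarSet Δ α h X P x t Λ' := by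
  let := F0inf X
  have hΓ_ae : ∀ᵐ ω ∂(P x).restrict {ω | (t : ℝ≥0∞) < lifetime Δ X ω}, ω ∉ Γ := by
    rw [ae_restrict_iff' (measurableSet_lt_lifetime_F0inf Δ hX_absorb t)]
    filter_upwards [measure_eq_zero_iff_ae_notMem.mp hΓ] with ω hω hωL hωΓ
    exact hω ⟨hωΓ, hωL⟩
  refine congrArg (h x * ·) (lintegral_congr_ae ?_)
  filter_upwards [hΓ_ae] with ω hω
  have hiff : ω ∈ Λ ↔ ω ∈ Λ' := by
    by_contra hne
    exact hω (hsd (by rw [Set.mem_symmDiff]; tauto))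
  rw [Set.indicator_eq_indicator hiff rfl]

lemma Qmu_eq_of_symmDiff_subset
    (hX_absorb : ∀ (ω : Ω) (s t : ℝ≥0), s ≤ t → X s ω = Δ → X t ω = Δ)
    (h_meas : Measurable h) (h_pos : ∀ x : S, x ≠ Δ → 0 < h x ∧ h x < ∞)
    (hP_prob : ∀ x : S, IsProbabilityMeasure (P x))
    (hP_meas : ∀ Λ : Set Ω, MeasurableSet[F0inf X] Λ → Measurable fun x => P x Λ)
    (hP_start : ∀ x : S, P x {ω | X 0 ω = x} = 1)
    {μ : Measure S} {t : ℝ≥0} {Λ Λ' Γ : Set Ω} (hΓ : MeasurableSet[F0inf X] Γ)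
    (hsd : symmDiff Λ Λ' ⊆ Γ) (hQ : ∀ T : ℝ≥0, t < T → Qmu Δ α h X P μ T Γ = 0) :
    Qmu Δ α h X P μ t Λ' = Qmu Δ α h X P μ t Λ := by
  refine lintegral_congr_ae ?_
  filter_upwards [ae_measure_inter_lt_lifetime_eq_zero Δ hX_absorb h_meas h_pos hP_prob hP_meas
    hP_start hΓ hQ] with x hx
  exact (QbarSet_congr_of_symmDiff_subset Δ hX_absorb hsd hx).symm

lemma inter_lt_lifetime_mem_Fhmu
    (hX_absorb : ∀ (ω : Ω) (s t : ℝ≥0), s ≤ t → X s ω = Δ → X t ω = Δ)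
    {θ : ℝ≥0 → Ω → Ω} (hshift : ∀ (s t : ℝ≥0) (ω : Ω), X t (θ s ω) = X (t + s) ω)
    (h_meas : Measurable h) (h_pos : ∀ x : S, x ≠ Δ → 0 < h x ∧ h x < ∞)
    (hP_prob : ∀ x : S, IsProbabilityMeasure (P x))
    (hP_meas : ∀ Λ : Set Ω, MeasurableSet[F0inf X] Λ → Measurable fun x => P x Λ)
    (hP_start : ∀ x : S, P x {ω | X 0 ω = x} = 1)
    (hMarkov : ∀ (s : ℝ≥0) (x : S) (Y : Ω → ℝ≥0∞), Measurable[F0inf X] Y →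
      ∀ Λ : Set Ω, MeasurableSet[F0plus X s] Λ →
        ∫⁻ ω in Λ, Y (θ s ω) ∂(P x)
          = ∫⁻ ω in Λ, (∫⁻ ω', Y ω' ∂(P (X s ω))) ∂(P x))
    {μ : Measure S} {t : ℝ≥0} {Λ : Set Ω} (hΛ : Λ ∈ Mmu Δ α h X P μ t) :
    Λ ∩ {ω | (t : ℝ≥0∞) < lifetime Δ X ω} ∈ Fhmu X P μ t := by
  obtain ⟨Λ', Γ, hΛ', hΓ, hsd, hQ⟩ := hΛ
  have hΓ_inf := F0plus_le_F0inf X t _ hΓ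
  set L := {ω | (t : ℝ≥0∞) < lifetime Δ X ω}
  set A := X t ⁻¹' {y | P y {ω | 0 < lifetime Δ X ω} = 1}
  have hL := measurableSet_lt_lifetime_F0inf Δ hX_absorb t
  have hL0 := measurableSet_pos_lifetime Δ hX_absorb
  have hA : MeasurableSet[F0 X t] A :=
    measurable_F0 X le_rfl ((hP_meas _ hL0) (measurableSet_singleton 1))
  refine ⟨Λ' ∩ A, Γ ∩ L ∪ symmDiff L A, hΛ'.inter hA,
    (hΓ_inf.inter hL).union (hL.symmDiff (F0_le_F0inf X t _ hA)),
    (inter_symmDiff_inter_subset Λ Λ' L A).trans (union_subset_union_left _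
      (inter_subset_inter_left _ hsd)), ?_⟩
  refine (lintegral_congr_ae ?_).trans lintegral_zero
  filter_upwards [ae_measure_inter_lt_lifetime_eq_zero Δ hX_absorb h_meas h_pos hP_prob hP_meas
    hP_start hΓ_inf hQ] with x hx
  exact measure_union_null hx
    (measure_symmDiff_lt_lifetime_eq_zero Δ hX_absorb hshift hP_prob hP_meas hMarkov t x)

end MarkovFamily

lemma Mmu_mono {S : Type*} [MeasurableSpace S] {Ω : Type*} (Δ : S) (α : ℝ) (h : S → ℝ≥0∞)
    (X : ℝ≥0 → Ω → S) (P : S → @Measure Ω (F0inf X)) (μ : Measure S) :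
    Monotone (Mmu Δ α h X P μ) := by
  rintro s t hst Λ ⟨Λ', Γ, hΛ', hΓ, hsd, hQ⟩
  exact ⟨Λ', Γ, F0_mono X hst _ hΛ', F0plus_mono X hst _ hΓ, hsd,
    fun T hT => hQ T (hst.trans_lt hT)⟩

theorem Mmu_relation_with_Fhmu_and_monotone_general
    {S : Type*} [MeasurableSpace S]
    [StandardBorelSpace S] {Ω : Type*} (Δ : S)
    (X : ℝ≥0 → Ω → S) (θ : ℝ≥0 → Ω → Ω) (P : S → @Measure Ω (F0inf X))
    (h : S → ℝ≥0∞) (α : ℝ)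
    (h_meas : Measurable h)
    (h_pos : ∀ x : S, x ≠ Δ → 0 < h x ∧ h x < ∞)
    (hX_absorb : ∀ (ω : Ω) (s t : ℝ≥0), s ≤ t → X s ω = Δ → X t ω = Δ)
    (hshift : ∀ (s t : ℝ≥0) (ω : Ω), X t (θ s ω) = X (t + s) ω)
    (hP_prob : ∀ x : S, IsProbabilityMeasure (P x))
    (hP_meas : ∀ Λ : Set Ω, MeasurableSet[F0inf X] Λ → Measurable fun x => P x Λ)
    (hP_start : ∀ x : S, P x {ω | X 0 ω = x} = 1)
    (hMarkov : ∀ (s : ℝ≥0) (x : S) (Y : Ω → ℝ≥0∞), Measurable[F0inf X] Y →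
      ∀ Λ : Set Ω, MeasurableSet[F0plus X s] Λ →
        ∫⁻ ω in Λ, Y (θ s ω) ∂(P x)
          = ∫⁻ ω in Λ, (∫⁻ ω', Y ω' ∂(P (X s ω))) ∂(P x))
    :
    ∀ (μ : Measure S), IsProbabilityMeasure μ → ∀ t : ℝ≥0,
      (∀ Λ ∈ Mmu Δ α h X P μ t,
        (Λ ∩ {ω | (t : ℝ≥0∞) < lifetime Δ X ω}) ∈ Fhmu X P μ t ∧
        ∀ Λ' Γ : Set Ω, MeasurableSet[F0 X t] Λ' → MeasurableSet[F0plus X t] Γ →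
          symmDiff Λ Λ' ⊆ Γ → (∀ T : ℝ≥0, t < T → Qmu Δ α h X P μ T Γ = 0) →
          Qmu Δ α h X P μ t Λ' = Qmu Δ α h X P μ t Λ) ∧
      (∀ s : ℝ≥0, s < t → Mmu Δ α h X P μ s ⊆ Mmu Δ α h X P μ t) := by
  intro μ _ t
  refine ⟨fun Λ hΛ => ⟨?_, fun Λ' Γ _ hΓ hsd hQ => ?_⟩, fun s hst => Mmu_mono Δ α h X P μ hst.le⟩
  · exact inter_lt_lifetime_mem_Fhmu Δ hX_absorb hshift h_meas h_pos hP_prob hP_meas hP_start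
      hMarkov hΛ
  · exact Qmu_eq_of_symmDiff_subset Δ hX_absorb h_meas h_pos hP_prob hP_meas hP_start
      (F0plus_le_F0inf X t _ hΓ) hsd hQ

theorem Mmu_relation_with_Fhmu_and_monotone
    {S : Type*} [MeasurableSpace S] [TopologicalSpace S] [BorelSpace S]
    [StandardBorelSpace S] {Ω : Type*} (Δ : S)
    (X : ℝ≥0 → Ω → S) (θ : ℝ≥0 → Ω → Ω) (P : S → @Measure Ω (F0inf X))
    (h : S → ℝ≥0∞) (α : ℝ) (hα : 0 < α)
    (h_meas : Measurable h) (h_cem : h Δ = 0)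
    (h_pos : ∀ x : S, x ≠ Δ → 0 < h x ∧ h x < ∞)
    (hX_rc : ∀ (ω : Ω) (t : ℝ≥0),
      Filter.Tendsto (fun s => X s ω) (nhdsWithin t (Set.Ioi t)) (nhds (X t ω)))
    (hX_absorb : ∀ (ω : Ω) (s t : ℝ≥0), s ≤ t → X s ω = Δ → X t ω = Δ)
    (hshift : ∀ (s t : ℝ≥0) (ω : Ω), X t (θ s ω) = X (t + s) ω)
    (hP_prob : ∀ x : S, IsProbabilityMeasure (P x))
    (hP_meas : ∀ Λ : Set Ω, MeasurableSet[F0inf X] Λ → Measurable fun x => P x Λ)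
    (hP_start : ∀ x : S, P x {ω | X 0 ω = x} = 1)
    (hMarkov : ∀ (s : ℝ≥0) (x : S) (Y : Ω → ℝ≥0∞), Measurable[F0inf X] Y →
      ∀ Λ : Set Ω, MeasurableSet[F0plus X s] Λ →
        ∫⁻ ω in Λ, Y (θ s ω) ∂(P x)
          = ∫⁻ ω in Λ, (∫⁻ ω', Y ω' ∂(P (X s ω))) ∂(P x))
    :
    ∀ (μ : Measure S), IsProbabilityMeasure μ → ∀ t : ℝ≥0,
      (∀ Λ ∈ Mmu Δ α h X P μ t,
        (Λ ∩ {ω | (t : ℝ≥0∞) < lifetime Δ X ω}) ∈ Fhmu X P μ t ∧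
        ∀ Λ' Γ : Set Ω, MeasurableSet[F0 X t] Λ' → MeasurableSet[F0plus X t] Γ →
          symmDiff Λ Λ' ⊆ Γ → (∀ T : ℝ≥0, t < T → Qmu Δ α h X P μ T Γ = 0) →
          Qmu Δ α h X P μ t Λ' = Qmu Δ α h X P μ t Λ) ∧
      (∀ s : ℝ≥0, s < t → Mmu Δ α h X P μ s ⊆ Mmu Δ α h X P μ t) :=
  Mmu_relation_with_Fhmu_and_monotone_general Δ X θ P h α h_meas h_pos hX_absorb hshift hP_prob
    hP_meas hP_start hMarkov
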